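/- Let G be a group with elements g₁, g₂ and set g = [g₁,g₂] = g₁g₂g₁⁻¹g₂⁻¹. Then as operators on L^p(G), ∂_g = −L(g₁g₂)(∂_{g₂⁻¹}∂_{g₁⁻¹} − ∂_{g₁⁻¹}∂_{g₂⁻¹}), and consequently |⟨∂_g f₁, f₂⟩| ≤ C(ρ(g₁)+ρ(g₂)+1)² Γ₂(f₁)Γ₂(f₂) for all f₁, f₂ ∈ L² and an absolute constant C (depending on the gradient constants). -/

import Mathlib

open MeasureTheory ENNReal Pointwise

/-- Word distance `ρ(g) = inf{n ≥ 1 : g ∈ Uⁿ}`. -/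
noncomputable def wordDist {G : Type*} [Group G] (U : Set G) (g : G) : ℕ :=
  sInf {n : ℕ | 0 < n ∧ g ∈ U ^ n}

/-- The `L²` gradient `Γ₂(f) = sup_{u∈U} ‖∂_u f‖₂`. -/
noncomputable def grad {G : Type*} [Group G] [MeasurableSpace G]
    (U : Set G) (μ : Measure G) (p : ℝ≥0∞) (f : G → ℂ) : ℝ≥0∞ :=
  ⨆ u ∈ U, eLpNorm (fun h => f (u⁻¹ * h) - f h) p μ

/-- Left translation `(L(g)f)(h) = f(g⁻¹h)`. -/
def Lop {G : Type*} [Group G] (g : G) (f : G → ℂ) : G → ℂ := fun h => f (g⁻¹ * h)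

/-- Difference operator `(∂_g f)(h) = f(g⁻¹h) − f(h)`. -/
def delOp {G : Type*} [Group G] (g : G) (f : G → ℂ) : G → ℂ := fun h => f (g⁻¹ * h) - f h

/-!
For `g = [a, b]` a direct computation gives `∂_g = L(ab) (∂_{a⁻¹}∂_{b⁻¹} − ∂_{b⁻¹}∂_{a⁻¹})`.
Pairing with `f₂`, moving `L(ab)` and then the outer operator `∂_{u⁻¹}` to the other side as
its adjoint `∂_u`, and applying Cauchy–Schwarz bounds `|⟨∂_g f₁, f₂⟩|` by
`‖∂_{b⁻¹} f₁‖ ‖∂_a F‖ + ‖∂_{a⁻¹} f₁‖ ‖∂_b F‖` with `F = L((ab)⁻¹) f₂`. Since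
`∂_u L(c⁻¹) = L(c⁻¹) ∂_{c u c⁻¹}`, each factor is a difference of an `f_i` along an element of
word length `O(ρ(a) + ρ(b))`, and `‖∂_w f‖₂ ≤ ρ(w) Γ₂(f)` by the cocycle identity
`∂_{vu} = L(v) ∂_u + ∂_v`.
-/

section Algebra

variable {G : Type*} [Group G]

theorem delOp_eq_Lop_sub (u : G) (f : G → ℂ) : delOp u f = Lop u f - f := rfl

theorem neg_Lop (g : G) (f : G → ℂ) : -Lop g f = Lop g (-f) := rfl

theorem delOp_one (f : G → ℂ) : delOp 1 f = 0 := by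
  funext h
  simp [delOp]

theorem delOp_mul (v u : G) (f : G → ℂ) : delOp (v * u) f = Lop v (delOp u f) + delOp v f := by
  funext h
  simp only [delOp, Lop, Pi.add_apply, mul_inv_rev, mul_assoc]
  ring

theorem delOp_Lop_inv (u c : G) (f : G → ℂ) :
    delOp u (Lop c⁻¹ f) = Lop c⁻¹ (delOp (c * u * c⁻¹) f) := by
  funext h
  simp [delOp, Lop, mul_assoc]

theorem delOp_commutator (a b : G) (f : G → ℂ) :
    delOp (a * b * a⁻¹ * b⁻¹) f =
      -(Lop (a * b) (delOp b⁻¹ (delOp a⁻¹ f) - delOp a⁻¹ (delOp b⁻¹ f))) := by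
  funext h
  simp only [delOp, Lop, Pi.neg_apply, Pi.sub_apply, mul_inv_rev, inv_inv, mul_assoc,
    mul_inv_cancel_left]
  ring

end Algebra

section WordDist

variable {G : Type*} [Group G] {U : Set G}

theorem wordDist_spec (hgen : ∀ g : G, ∃ n : ℕ, 0 < n ∧ g ∈ U ^ n) (g : G) :
    0 < wordDist U g ∧ g ∈ U ^ wordDist U g :=
  Nat.sInf_mem (hgen g)

theorem wordDist_inv (hsymm : U⁻¹ = U) (g : G) : wordDist U g⁻¹ = wordDist U g := by
  have hpow (n : ℕ) : g⁻¹ ∈ U ^ n ↔ g ∈ U ^ n := by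
    rw [← Set.inv_mem_inv, ← inv_pow, hsymm, inv_inv]
  simp only [wordDist, hpow]

theorem wordDist_mul_le (hgen : ∀ g : G, ∃ n : ℕ, 0 < n ∧ g ∈ U ^ n) (a b : G) :
    wordDist U (a * b) ≤ wordDist U a + wordDist U b := by
  obtain ⟨ha_pos, ha⟩ := wordDist_spec hgen a
  obtain ⟨-, hb⟩ := wordDist_spec hgen b
  exact Nat.sInf_le ⟨by omega, pow_add U _ _ ▸ Set.mul_mem_mul ha hb⟩

theorem wordDist_conj_le (hgen : ∀ g : G, ∃ n : ℕ, 0 < n ∧ g ∈ U ^ n) (hsymm : U⁻¹ = U)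
    (c u : G) : wordDist U (c * u * c⁻¹) ≤ 2 * wordDist U c + wordDist U u := by
  have h₁ := wordDist_mul_le hgen (c * u) c⁻¹
  have h₂ := wordDist_mul_le hgen c u
  rw [wordDist_inv hsymm] at h₁
  omega

end WordDist

section Conj

variable {α : Type*} [MeasurableSpace α] {μ : Measure α} {F H : α → ℂ}

theorem MeasureTheory.MemLp.integrable_mul_conj (hF : MemLp F 2 μ) (hH : MemLp H 2 μ) :
    Integrable (fun h => F h * starRingEnd ℂ (H h)) μ :=
  hF.integrable_mul hH.star

theorem enorm_integral_mul_conj_le (hF : AEStronglyMeasurable F μ)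
    (hH : AEStronglyMeasurable H μ) :
    ‖∫ h, F h * starRingEnd ℂ (H h) ∂μ‖ₑ ≤ eLpNorm F 2 μ * eLpNorm H 2 μ :=
  calc ‖∫ h, F h * starRingEnd ℂ (H h) ∂μ‖ₑ
      ≤ eLpNorm (F • star H) 1 μ := by
        rw [eLpNorm_one_eq_lintegral_enorm]
        exact enorm_integral_le_lintegral_enorm _
    _ ≤ eLpNorm F 2 μ * eLpNorm (star H) 2 μ := eLpNorm_smul_le_mul_eLpNorm hH.star hF
    _ = eLpNorm F 2 μ * eLpNorm H 2 μ := by rw [eLpNorm_star]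

end Conj

theorem eLpNorm_delOp_le_grad {G : Type*} [Group G] [MeasurableSpace G] {μ : Measure G}
    {p : ℝ≥0∞} {f : G → ℂ} (U : Set G) {u : G} (hu : u ∈ U) :
    eLpNorm (delOp u f) p μ ≤ grad U μ p f :=
  le_iSup₂ (f := fun u (_ : u ∈ U) => eLpNorm (fun h => f (u⁻¹ * h) - f h) p μ) u hu

section Translation

variable {G : Type*} [Group G] [MeasurableSpace G] [MeasurableMul G]
  {μ : Measure G} [μ.IsMulLeftInvariant] {p : ℝ≥0∞} {f : G → ℂ}

theorem MeasureTheory.AEStronglyMeasurable.Lop (hf : AEStronglyMeasurable f μ) (g : G) :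
    AEStronglyMeasurable (Lop g f) μ :=
  hf.comp_measurePreserving (measurePreserving_mul_left μ g⁻¹)

theorem MeasureTheory.MemLp.Lop (hf : MemLp f p μ) (g : G) : MemLp (Lop g f) p μ :=
  hf.comp_measurePreserving (measurePreserving_mul_left μ g⁻¹)

theorem MeasureTheory.MemLp.delOp (hf : MemLp f p μ) (g : G) : MemLp (delOp g f) p μ :=
  (hf.Lop g).sub hf

theorem eLpNorm_Lop (hf : AEStronglyMeasurable f μ) (g : G) :
    eLpNorm (Lop g f) p μ = eLpNorm f p μ :=
  eLpNorm_comp_measurePreserving hf (measurePreserving_mul_left μ g⁻¹)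

theorem eLpNorm_delOp_le_of_mem_pow (hp : 1 ≤ p) (hf : AEStronglyMeasurable f μ) {U : Set G}
    {n : ℕ} {w : G} (hw : w ∈ U ^ n) : eLpNorm (delOp w f) p μ ≤ n * grad U μ p f := by
  induction n generalizing w with
  | zero =>
    rw [pow_zero, Set.mem_one] at hw
    simp [hw, delOp_one]
  | succ n ih =>
    obtain ⟨v, hv, u, hu, rfl⟩ := pow_succ U n ▸ hw
    have hdu : AEStronglyMeasurable (delOp u f) μ := (hf.Lop u).sub hf
    calc eLpNorm (delOp (v * u) f) p μ
        ≤ eLpNorm (Lop v (delOp u f)) p μ + eLpNorm (delOp v f) p μ := by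
          rw [delOp_mul]
          exact eLpNorm_add_le (hdu.Lop v) ((hf.Lop v).sub hf) hp
      _ ≤ grad U μ p f + n * grad U μ p f := by
          rw [eLpNorm_Lop hdu]
          exact add_le_add (eLpNorm_delOp_le_grad U hu) (ih hv)
      _ = (n + 1 : ℕ) * grad U μ p f := by
          push_cast
          ring

theorem eLpNorm_delOp_le_wordDist {U : Set G} (hgen : ∀ g : G, ∃ n : ℕ, 0 < n ∧ g ∈ U ^ n)
    (hp : 1 ≤ p) (hf : AEStronglyMeasurable f μ) (w : G) :
    eLpNorm (delOp w f) p μ ≤ wordDist U w * grad U μ p f :=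
  eLpNorm_delOp_le_of_mem_pow hp hf (wordDist_spec hgen w).2

end Translation

section Pairing

variable {G : Type*} [Group G] [MeasurableSpace G] [MeasurableMul G]
  {μ : Measure G} [μ.IsMulLeftInvariant] {F H : G → ℂ}

theorem integral_Lop_mul_conj (a : G) :
    ∫ h, Lop a F h * starRingEnd ℂ (H h) ∂μ = ∫ h, F h * starRingEnd ℂ (Lop a⁻¹ H h) ∂μ := by
  rw [← integral_mul_left_eq_self _ a]
  simp [Lop]

theorem integral_delOp_mul_conj (hF : MemLp F 2 μ) (hH : MemLp H 2 μ) (u : G) :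
    ∫ h, delOp u F h * starRingEnd ℂ (H h) ∂μ =
      ∫ h, F h * starRingEnd ℂ (delOp u⁻¹ H h) ∂μ := by
  simp only [delOp_eq_Lop_sub, Pi.sub_apply, map_sub, sub_mul, mul_sub]
  rw [integral_sub ((hF.Lop u).integrable_mul_conj hH) (hF.integrable_mul_conj hH),
    integral_sub (hF.integrable_mul_conj (hH.Lop u⁻¹)) (hF.integrable_mul_conj hH),
    integral_Lop_mul_conj]

theorem enorm_integral_delOp_commutator_mul_conj_le {f₁ f₂ : G → ℂ} (hf₁ : MemLp f₁ 2 μ)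
    (hf₂ : MemLp f₂ 2 μ) (a b : G) :
    ‖∫ h, delOp (a * b * a⁻¹ * b⁻¹) f₁ h * starRingEnd ℂ (f₂ h) ∂μ‖ₑ ≤
      eLpNorm (delOp b⁻¹ f₁) 2 μ * eLpNorm (delOp (a * b * a * (a * b)⁻¹) f₂) 2 μ +
        eLpNorm (delOp a⁻¹ f₁) 2 μ * eLpNorm (delOp (a * b * b * (a * b)⁻¹) f₂) 2 μ := by
  set F := Lop (a * b)⁻¹ f₂
  have hF : MemLp F 2 μ := hf₂.Lop _
  have hsplit : ∫ h, delOp (a * b * a⁻¹ * b⁻¹) f₁ h * starRingEnd ℂ (f₂ h) ∂μ =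
      (∫ h, delOp a⁻¹ (delOp b⁻¹ f₁) h * starRingEnd ℂ (F h) ∂μ) -
        ∫ h, delOp b⁻¹ (delOp a⁻¹ f₁) h * starRingEnd ℂ (F h) ∂μ := by
    have hA := ((hf₁.delOp b⁻¹).delOp a⁻¹).integrable_mul_conj hF
    have hB := ((hf₁.delOp a⁻¹).delOp b⁻¹).integrable_mul_conj hF
    calc _ = ∫ h, Lop (a * b) (delOp a⁻¹ (delOp b⁻¹ f₁) - delOp b⁻¹ (delOp a⁻¹ f₁)) h *
            starRingEnd ℂ (f₂ h) ∂μ := by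
          rw [delOp_commutator, neg_Lop, neg_sub]
      _ = _ := by
          rw [integral_Lop_mul_conj, ← integral_sub hA hB]
          simp only [F, Pi.sub_apply, sub_mul]
  rw [hsplit, integral_delOp_mul_conj (hf₁.delOp _) hF, integral_delOp_mul_conj (hf₁.delOp _) hF,
    inv_inv, inv_inv, delOp_Lop_inv, delOp_Lop_inv]
  calc _ ≤ _ := enorm_sub_le
    _ ≤ _ := add_le_add (enorm_integral_mul_conj_le (hf₁.delOp _).1 ((hf₂.delOp _).1.Lop _))
        (enorm_integral_mul_conj_le (hf₁.delOp _).1 ((hf₂.delOp _).1.Lop _))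
    _ = _ := by rw [eLpNorm_Lop (hf₂.delOp _).1, eLpNorm_Lop (hf₂.delOp _).1]

end Pairing

theorem stmt14_general {G : Type*} [Group G] [MeasurableSpace G] [MeasurableMul G]
    (μ : Measure G) [μ.IsMulLeftInvariant]
    (U : Set G) (hUsymm : U⁻¹ = U)
    (hUgen : ∀ g : G, ∃ n : ℕ, 0 < n ∧ g ∈ U ^ n) :
    (∀ (g₁ g₂ : G) (f : G → ℂ),
      delOp (g₁ * g₂ * g₁⁻¹ * g₂⁻¹) f =
        -(Lop (g₁ * g₂)
            (delOp g₂⁻¹ (delOp g₁⁻¹ f) - delOp g₁⁻¹ (delOp g₂⁻¹ f)))) ∧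
    ∃ C : ℝ, 0 < C ∧
      ∀ (g₁ g₂ : G) (f₁ f₂ : G → ℂ), MemLp f₁ 2 μ → MemLp f₂ 2 μ →
        ENNReal.ofReal (norm
            (∫ h, delOp (g₁ * g₂ * g₁⁻¹ * g₂⁻¹) f₁ h * (starRingEnd ℂ) (f₂ h) ∂μ))
          ≤ ENNReal.ofReal
              (C * ((wordDist U g₁ : ℝ) + (wordDist U g₂ : ℝ) + 1) ^ 2)
            * grad U μ 2 f₁ * grad U μ 2 f₂ := by
  refine ⟨delOp_commutator, 3, by norm_num, fun a b f₁ f₂ hf₁ hf₂ => ?_⟩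
  set ρa := wordDist U a
  set ρb := wordDist U b
  have hbound {f : G → ℂ} (hf : MemLp f 2 μ) {w : G} {n : ℕ} (hw : wordDist U w ≤ n) :
      eLpNorm (delOp w f) 2 μ ≤ n * grad U μ 2 f :=
    (eLpNorm_delOp_le_wordDist hUgen one_le_two hf.1 w).trans (by gcongr)
  have hab := wordDist_mul_le hUgen a b
  have hconj_a := wordDist_conj_le hUgen hUsymm (a * b) a
  have hconj_b := wordDist_conj_le hUgen hUsymm (a * b) b
  rw [ofReal_norm]
  calc _ ≤ _ := enorm_integral_delOp_commutator_mul_conj_le hf₁ hf₂ a b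
    _ ≤ ρb * grad U μ 2 f₁ * ((3 * ρa + 2 * ρb : ℕ) * grad U μ 2 f₂) +
          ρa * grad U μ 2 f₁ * ((2 * ρa + 3 * ρb : ℕ) * grad U μ 2 f₂) := by
      gcongr
      · exact hbound hf₁ (wordDist_inv hUsymm b).le
      · exact hbound hf₂ (by omega)
      · exact hbound hf₁ (wordDist_inv hUsymm a).le
      · exact hbound hf₂ (by omega)
    _ = ((ρb * (3 * ρa + 2 * ρb) + ρa * (2 * ρa + 3 * ρb) : ℕ) : ℝ≥0∞) *
          grad U μ 2 f₁ * grad U μ 2 f₂ := by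
      push_cast
      ring
    _ ≤ _ := by
      gcongr
      rw [show 3 * ((ρa : ℝ) + ρb + 1) ^ 2 = ((3 * (ρa + ρb + 1) ^ 2 : ℕ) : ℝ) by push_cast; ring,
        ofReal_natCast]
      exact_mod_cast (by nlinarith)

/-- for `g = [g₁,g₂] = g₁g₂g₁⁻¹g₂⁻¹` one has the operator identity
`∂_g = −L(g₁g₂)(∂_{g₂⁻¹}∂_{g₁⁻¹} − ∂_{g₁⁻¹}∂_{g₂⁻¹})` on functions on `G`, and consequently
`|⟪∂_g f₁, f₂⟫| ≤ C(ρ(g₁)+ρ(g₂)+1)² Γ₂(f₁)Γ₂(f₂)` for all `f₁, f₂ ∈ L²` and an absolute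
constant `C`. -/
theorem stmt14 {G : Type*} [Group G] [MeasurableSpace G] [MeasurableMul G]
    (μ : Measure G) [μ.IsMulLeftInvariant]
    (U : Set G) (hU1 : (1 : G) ∈ U) (hUsymm : U⁻¹ = U)
    (hUgen : ∀ g : G, ∃ n : ℕ, 0 < n ∧ g ∈ U ^ n) :
    (∀ (g₁ g₂ : G) (f : G → ℂ),
      delOp (g₁ * g₂ * g₁⁻¹ * g₂⁻¹) f =
        -(Lop (g₁ * g₂)
            (delOp g₂⁻¹ (delOp g₁⁻¹ f) - delOp g₁⁻¹ (delOp g₂⁻¹ f)))) ∧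
    ∃ C : ℝ, 0 < C ∧
      ∀ (g₁ g₂ : G) (f₁ f₂ : G → ℂ), MemLp f₁ 2 μ → MemLp f₂ 2 μ →
        ENNReal.ofReal (norm
            (∫ h, delOp (g₁ * g₂ * g₁⁻¹ * g₂⁻¹) f₁ h * (starRingEnd ℂ) (f₂ h) ∂μ))
          ≤ ENNReal.ofReal
              (C * ((wordDist U g₁ : ℝ) + (wordDist U g₂ : ℝ) + 1) ^ 2)
            * grad U μ 2 f₁ * grad U μ 2 f₂ :=
  stmt14_general μ U hUsymm hUgen
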